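/- arXiv:2209.10142 — 3 statements merged into one kernel-verified Lean document; each statement's English description precedes it below -/
import Mathlib

section
/- Under the stated setup, δ₁ = S₁((r₁, r₂, r₃); λ) − S₁((r₁−1, r₂, r₃+1); λ') satisfies δ₁ ≥ −2^{r₂+r₃+2} + 2^{r₃+1}. -/
open Finset

/-- The fundamental Lagrange interpolation polynomial value `l_i(μ)` for
equally spaced nodes of the triangle, degree `n`. -/
noncomputable def lagPoly (n : ℕ) (mu : ℝ × ℝ × ℝ) (i : ℕ × ℕ × ℕ) : ℝ :=
  (Real.Gamma (n * mu.1 + 1) / (i.1.factorial * Real.Gamma (n * mu.1 - i.1 + 1))) *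
  (Real.Gamma (n * mu.2.1 + 1) / (i.2.1.factorial * Real.Gamma (n * mu.2.1 - i.2.1 + 1))) *
  (Real.Gamma (n * mu.2.2 + 1) / (i.2.2.factorial * Real.Gamma (n * mu.2.2 - i.2.2 + 1)))

/-- `S₁((ρ₁,ρ₂,ρ₃); μ) = Σ_{i₂=0}^{ρ₂} Σ_{i₃=0}^{ρ₃} |l_{(n−i₂−i₃, i₂, i₃)}(μ)|`. -/
noncomputable def S1 (n : ℕ) (ρ : ℕ × ℕ × ℕ) (mu : ℝ × ℝ × ℝ) : ℝ :=
  ∑ i₂ ∈ Finset.range (ρ.2.1 + 1), ∑ i₃ ∈ Finset.range (ρ.2.2 + 1),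
    |lagPoly n mu (n - i₂ - i₃, i₂, i₃)|

/-!
Each factor `Γ(x + 1) / (i! Γ(x - i + 1))` of `l_i` is the generalized binomial coefficient
`C(x, i) = x (x - 1) ⋯ (x - i + 1) / i!`, so with `x = n λ' = (r₁ - 1 + α₁, r₂ + α₂, r₃ + 1 + α₃)`
the second sum is `Σ |C(x₁, n - i₂ - i₃)| C(x₂, i₂) C(x₃, i₃)`. Since `n - i₂ - i₃ ≥ r₁ ≥ x₁`,
`|C(x₁, ·)|` is nonincreasing there, so the first factor is at most
`|C(x₁, r₁)| ≤ |α₁| (1 + α₁) / 2`. Pascal's rule gives `Σ_{i ≤ m} C(m + α, i) ≤ 2^m (1 + α)`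
for `α ∈ [0, 1]`, and `|α₁| (1 + α₁) (1 + α₂) (1 + α₃) ≤ 2`, so the second sum is at most
`2^(r₂ + r₃ + 1)`. The first sum is nonnegative, which gives the bound.
-/

namespace Ring

section Field

variable {R : Type*} [Field R] [CharZero R]

theorem choose_succ_right_eq (x : R) (i : ℕ) :
    choose x (i + 1) * (i + 1) = choose x i * (x - i) := by
  have h := descPochhammer_eq_factorial_smul_choose x (i + 1)
  rw [descPochhammer_succ_right, Polynomial.smeval_mul, Polynomial.smeval_sub,
    Polynomial.smeval_X, Polynomial.smeval_natCast, descPochhammer_eq_factorial_smul_choose,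
    Nat.factorial_succ] at h
  simp only [nsmul_eq_mul, Nat.cast_mul, pow_zero, pow_one] at h
  apply mul_left_cancel₀ (Nat.cast_ne_zero.mpr i.factorial_ne_zero : (i.factorial : R) ≠ 0)
  push_cast at h
  linear_combination -h

theorem choose_succ_right (x : R) (i : ℕ) :
    choose x (i + 1) = choose x i * (x - i) / (i + 1) := by
  rw [← choose_succ_right_eq, mul_div_cancel_right₀ _ (Nat.cast_add_one_ne_zero i)]

end Field

theorem sum_range_choose_add_one {R : Type*} [NonAssocRing R] [Pow R ℕ] [NatPowAssoc R]
    [BinomialRing R] (x : R) (N : ℕ) :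
    ∑ i ∈ range (N + 1), choose (x + 1) i
      = ∑ i ∈ range (N + 1), choose x i + ∑ i ∈ range N, choose x i := by
  induction N with
  | zero => simp
  | succ N ih =>
    rw [sum_range_succ, ih, choose_succ_succ, sum_range_succ _ (N + 1), sum_range_succ _ N]
    abel

section LinearOrderedField

variable {R : Type*} [Field R] [LinearOrder R] [IsStrictOrderedRing R]

theorem choose_nonneg {x : R} {i : ℕ} (h : (i : R) - 1 ≤ x) : 0 ≤ choose x i := by
  induction i with
  | zero => rw [choose_zero_right]; exact zero_le_one
  | succ i ih =>
    push_cast at h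
    rw [choose_succ_right]
    exact div_nonneg (mul_nonneg (ih (by linarith)) (by linarith)) (by positivity)

theorem abs_choose_succ_le {x : R} {i : ℕ} (h₁ : -1 ≤ x) (h₂ : x ≤ 2 * i + 1) :
    |choose x (i + 1)| ≤ |choose x i| := by
  have hi : |x - i| ≤ i + 1 := abs_le.mpr ⟨by linarith, by linarith⟩
  rw [choose_succ_right, abs_div, abs_mul, abs_of_pos (by positivity : (0 : R) < i + 1)]
  exact div_le_of_le_mul₀ (by positivity) (abs_nonneg _)
    (mul_le_mul_of_nonneg_left hi (abs_nonneg _))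

theorem abs_choose_le_of_le {x : R} {r i : ℕ} (hx : -1 ≤ x) (hxr : x ≤ r) (hri : r ≤ i) :
    |choose x i| ≤ |choose x r| := by
  induction i, hri using Nat.le_induction with
  | base => rfl
  | succ i hri ih =>
    have : (r : R) ≤ i := by exact_mod_cast hri
    exact (abs_choose_succ_le hx (by linarith)).trans ih

theorem sum_range_choose_add_two_le {α : R} (h₀ : 0 ≤ α) (h₁ : α ≤ 1) (m : ℕ) :
    ∑ i ∈ range (m + 2), choose (m + α) i ≤ 2 ^ m * (1 + α) := by
  induction m with
  | zero => simp [sum_range_succ]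
  | succ m ih =>
    set x : R := m + α
    -- Pascal's rule doubles the sum up to the extra term `choose x (m + 2)`, whose only
    -- negative factor is `x - (m + 1) = α - 1`.
    have hlast : choose x (m + 2) ≤ 0 := by
      rw [choose_succ_right]
      refine div_nonpos_of_nonpos_of_nonneg (mul_nonpos_of_nonneg_of_nonpos ?_ ?_) (by positivity)
      · exact choose_nonneg (by push_cast; linarith)
      · push_cast; linarith
    calc ∑ i ∈ range (m + 1 + 2), choose (((m + 1 : ℕ) : R) + α) i
        = 2 * ∑ i ∈ range (m + 2), choose x i + choose x (m + 2) := by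
          rw [show ((m + 1 : ℕ) : R) + α = x + 1 by push_cast; ring, sum_range_choose_add_one,
            sum_range_succ]
          ring
      _ ≤ 2 ^ (m + 1) * (1 + α) := by rw [pow_succ]; linarith

theorem sum_range_abs_choose_le {α : R} (h₀ : 0 ≤ α) (h₁ : α ≤ 1) (m : ℕ) :
    ∑ i ∈ range (m + 1), |choose (m + α) i| ≤ 2 ^ m * (1 + α) := by
  have hnonneg : ∀ i ≤ m + 1, 0 ≤ choose ((m : R) + α) i := fun i hi => by
    have : (i : R) ≤ m + 1 := by exact_mod_cast hi
    exact choose_nonneg (by linarith)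
  calc ∑ i ∈ range (m + 1), |choose (m + α) i|
      = ∑ i ∈ range (m + 1), choose (m + α) i :=
        sum_congr rfl fun i hi => abs_of_nonneg (hnonneg i (by simp at hi; omega))
    _ ≤ ∑ i ∈ range (m + 2), choose (m + α) i :=
        by rw [sum_range_succ _ (m + 1)]; linarith [hnonneg (m + 1) le_rfl]
    _ ≤ 2 ^ m * (1 + α) := sum_range_choose_add_two_le h₀ h₁ m

theorem choose_add_self_le {α : R} (h₀ : -1 ≤ α) (h₁ : α ≤ 1) {k : ℕ} (hk : 1 ≤ k) :
    choose (k + α) k ≤ (1 + α) * (k + 1) / 2 := by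
  induction k, hk using Nat.le_induction with
  | base => rw [Nat.cast_one, choose_one_right]; linarith
  | succ k hk ih =>
    have hc : 0 ≤ choose ((k : R) + α) k := choose_nonneg (by linarith)
    have hpascal : choose (((k + 1 : ℕ) : R) + α) (k + 1) * (k + 1)
        = choose ((k : R) + α) k * (k + 1 + α) := by
      rw [show ((k + 1 : ℕ) : R) + α = (k + α) + 1 by push_cast; ring, choose_succ_succ,
        add_mul, choose_succ_right_eq]
      ring
    have hk0 : (0 : R) < k + 1 := by positivity
    rw [← mul_le_mul_iff_left₀ hk0, hpascal]
    push_cast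
    nlinarith

theorem abs_choose_add_self_succ_le {α : R} (h₀ : -1 ≤ α) (h₁ : α ≤ 1) {k : ℕ} (hk : 1 ≤ k) :
    |choose (k + α) (k + 1)| ≤ |α| * (1 + α) / 2 := by
  have hk0 : (0 : R) < k + 1 := by positivity
  have hc : 0 ≤ choose ((k : R) + α) k := choose_nonneg (by linarith)
  have h := congrArg abs (choose_succ_right_eq ((k : R) + α) k)
  rw [abs_mul, abs_mul, abs_of_pos hk0, add_sub_cancel_left, abs_of_nonneg hc] at h
  rw [← mul_le_mul_iff_left₀ hk0, h]
  nlinarith [choose_add_self_le h₀ h₁ hk, abs_nonneg α]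

end LinearOrderedField

end Ring

theorem Real.Gamma_div_eq_choose {x : ℝ} (hx : -1 < x) (i : ℕ) :
    Real.Gamma (x + 1) / (i.factorial * Real.Gamma (x - i + 1)) = Ring.choose x i := by
  -- `Real.Gamma` is `0` at its poles; `Γ(y + 1) = y Γ(y)` still holds for every `y ≠ 0`, and
  -- for `y = x - i = 0` both sides of the inductive step vanish.
  induction i with
  | zero =>
    simp [(Real.Gamma_pos_of_pos (by linarith : 0 < x + 1)).ne']
  | succ i ih =>
    rw [Ring.choose_succ_right, ← ih, Nat.factorial_succ, show x - ((i + 1 : ℕ) : ℝ) + 1 = x - i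
      by push_cast; ring]
    by_cases hxi : x - i = 0
    · simp [hxi]
    · rw [Real.Gamma_add_one hxi]
      push_cast
      field_simp

theorem abs_mul_prod_one_add_le_two {R : Type*} [Field R] [LinearOrder R] [IsStrictOrderedRing R]
    {a b c : R} (habc : a + b + c = 1) (ha : -1 ≤ a)
    (hb₀ : 0 ≤ b) (hb₁ : b ≤ 1) (hc₀ : 0 ≤ c) (hc₁ : c ≤ 1) :
    |a| * (1 + a) * ((1 + b) * (1 + c)) ≤ 2 := by
  have hbc : 0 ≤ (1 + b) * (1 + c) := by positivity
  rcases le_or_gt 0 a with ha₀ | ha₀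
  · -- `a (1 + a) (3 - a) ^ 2 ≤ 8` on `[0, 1]`, with equality at `a = 1`
    have hamgm : (1 + b) * (1 + c) ≤ ((3 - a) / 2) ^ 2 := by nlinarith [sq_nonneg (b - c)]
    have ha1 : a ≤ 1 := by linarith
    rw [abs_of_nonneg ha₀]
    nlinarith [mul_le_mul_of_nonneg_left hamgm (by positivity : 0 ≤ a * (1 + a)),
      mul_nonneg (mul_nonneg ha₀ ha₀) (sub_nonneg.mpr ha1), mul_nonneg ha₀ (sub_nonneg.mpr ha1),
      sub_nonneg.mpr ha1]
  · have h4 : (1 + b) * (1 + c) ≤ 4 := by nlinarith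
    rw [abs_of_neg ha₀]
    nlinarith [sq_nonneg (1 + 2 * a)]

theorem lagPoly_div_eq {n : ℕ} (hn : n ≠ 0) {x₁ x₂ x₃ : ℝ} (h₁ : -1 < x₁) (h₂ : -1 < x₂)
    (h₃ : -1 < x₃) (i : ℕ × ℕ × ℕ) :
    lagPoly n (x₁ / n, x₂ / n, x₃ / n) i
      = Ring.choose x₁ i.1 * Ring.choose x₂ i.2.1 * Ring.choose x₃ i.2.2 := by
  have hn' : (n : ℝ) ≠ 0 := Nat.cast_ne_zero.mpr hn
  simp only [lagPoly, mul_div_cancel₀ _ hn', Real.Gamma_div_eq_choose h₁,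
    Real.Gamma_div_eq_choose h₂, Real.Gamma_div_eq_choose h₃]

theorem S1_div_le {n : ℕ} (hn : n ≠ 0) (ρ : ℕ × ℕ × ℕ) {x₁ x₂ x₃ K : ℝ} (h₁ : -1 < x₁)
    (h₂ : -1 < x₂) (h₃ : -1 < x₃)
    (hK : ∀ i₂ ≤ ρ.2.1, ∀ i₃ ≤ ρ.2.2, |Ring.choose x₁ (n - i₂ - i₃)| ≤ K) :
    S1 n ρ (x₁ / n, x₂ / n, x₃ / n)
      ≤ K * ((∑ i ∈ range (ρ.2.1 + 1), |Ring.choose x₂ i|)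
          * ∑ i ∈ range (ρ.2.2 + 1), |Ring.choose x₃ i|) := by
  rw [S1, sum_mul_sum, mul_sum]
  refine sum_le_sum fun i₂ hi₂ => ?_
  rw [mul_sum]
  refine sum_le_sum fun i₃ hi₃ => ?_
  rw [lagPoly_div_eq hn h₁ h₂ h₃, abs_mul, abs_mul, mul_assoc]
  exact mul_le_mul_of_nonneg_right
    (hK i₂ (Nat.lt_succ_iff.mp (mem_range.mp hi₂)) i₃ (Nat.lt_succ_iff.mp (mem_range.mp hi₃)))
    (by positivity)

theorem S1_le_two_pow {n r₁ r₂ r₃ : ℕ} (hr : r₁ + r₂ + r₃ = n - 1) (hr₁ : 2 ≤ r₁)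
    {α₁ α₂ α₃ : ℝ} (hα₁ : -1 < α₁) (hα₂ : 0 ≤ α₂) (hα₂' : α₂ ≤ 1) (hα₃ : 0 ≤ α₃) (hα₃' : α₃ ≤ 1)
    (hs : α₁ + α₂ + α₃ = 1) :
    S1 n (r₁ - 1, r₂, r₃ + 1) (((r₁:ℝ) - 1 + α₁)/n, ((r₂:ℝ) + α₂)/n, ((r₃:ℝ) + 1 + α₃)/n)
      ≤ 2 ^ (r₂ + r₃ + 1) := by
  obtain ⟨k, rfl⟩ : ∃ k, r₁ = k + 1 := ⟨r₁ - 1, by omega⟩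
  have hα₁' : α₁ ≤ 1 := by linarith
  have hx₁ : ((k + 1 : ℕ) : ℝ) - 1 + α₁ = k + α₁ := by push_cast; ring
  have hx₃ : (r₃ : ℝ) + 1 + α₃ = ((r₃ + 1 : ℕ) : ℝ) + α₃ := by push_cast; ring
  have hk : (1 : ℝ) ≤ k := by exact_mod_cast (by omega : 1 ≤ k)
  have hfirst : ∀ i₂ ≤ r₂, ∀ i₃ ≤ r₃ + 1,
      |Ring.choose ((k : ℝ) + α₁) (n - i₂ - i₃)| ≤ |α₁| * (1 + α₁) / 2 := fun i₂ hi₂ i₃ hi₃ =>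
    (Ring.abs_choose_le_of_le (r := k + 1) (by linarith) (by push_cast; linarith) (by omega)).trans
      (Ring.abs_choose_add_self_succ_le hα₁.le hα₁' (by omega))
  rw [hx₁, hx₃]
  refine (S1_div_le (by omega) _ (by linarith) (by linarith) (by linarith) hfirst).trans ?_
  calc |α₁| * (1 + α₁) / 2 * ((∑ i ∈ range (r₂ + 1), |Ring.choose ((r₂ : ℝ) + α₂) i|)
          * ∑ i ∈ range (r₃ + 1 + 1), |Ring.choose (((r₃ + 1 : ℕ) : ℝ) + α₃) i|)
      ≤ |α₁| * (1 + α₁) / 2 * ((2 ^ r₂ * (1 + α₂)) * (2 ^ (r₃ + 1) * (1 + α₃))) := by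
        gcongr
        · exact div_nonneg (mul_nonneg (abs_nonneg _) (by linarith)) zero_le_two
        · exact Ring.sum_range_abs_choose_le hα₂ hα₂' r₂
        · exact Ring.sum_range_abs_choose_le hα₃ hα₃' (r₃ + 1)
    _ = |α₁| * (1 + α₁) * ((1 + α₂) * (1 + α₃)) * 2 ^ (r₂ + r₃) := by ring
    _ ≤ 2 * 2 ^ (r₂ + r₃) := by
        gcongr
        exact abs_mul_prod_one_add_le_two hs hα₁.le hα₂ hα₂' hα₃ hα₃'
    _ = 2 ^ (r₂ + r₃ + 1) := by ring

theorem delta1_lower_bound_general (n : ℕ) (r₁ r₂ r₃ : ℕ)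
    (hr : r₁ + r₂ + r₃ = n - 1) (α₁ α₂ α₃ : ℝ)
    (hα₁ : -1 < α₁) (hα₁' : α₁ < 1)
    (hα₂ : 0 ≤ α₂) (hα₂' : α₂ < 1) (hα₃ : 0 ≤ α₃) (hα₃' : α₃ < 1)
    (hs : α₁ + α₂ + α₃ = 1)
    (h13 : (r₁:ℝ) - 1 + α₁ ≥ (r₃:ℝ) + 1 + α₃) :
    S1 n (r₁, r₂, r₃) (((r₁:ℝ) + α₁)/n, ((r₂:ℝ) + α₂)/n, ((r₃:ℝ) + α₃)/n)
      - S1 n (r₁ - 1, r₂, r₃ + 1)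
          (((r₁:ℝ) - 1 + α₁)/n, ((r₂:ℝ) + α₂)/n, ((r₃:ℝ) + 1 + α₃)/n)
      ≥ -(2:ℝ) ^ (r₂ + r₃ + 2) + 2 ^ (r₃ + 1) := by
  have hr₁ : 2 ≤ r₁ := by
    have : (1 : ℝ) < r₁ := by linarith
    exact_mod_cast this
  have hS1 : 0 ≤ S1 n (r₁, r₂, r₃) (((r₁:ℝ) + α₁)/n, ((r₂:ℝ) + α₂)/n, ((r₃:ℝ) + α₃)/n) := by
    unfold S1; positivity
  have hS1' := S1_le_two_pow hr hr₁ hα₁ hα₂ hα₂'.le hα₃ hα₃'.le hs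
  have hpow : (2:ℝ) ^ (r₃ + 1) ≤ 2 ^ (r₂ + r₃ + 1) := pow_le_pow_right₀ one_le_two (by omega)
  rw [pow_succ _ (r₂ + r₃ + 1)]
  linarith

theorem delta1_lower_bound (n : ℕ) (hn : 4 ≤ n) (r₁ r₂ r₃ : ℕ)
    (hr : r₁ + r₂ + r₃ = n - 1) (α₁ α₂ α₃ : ℝ)
    (hα₁ : -1 < α₁) (hα₁' : α₁ < 1)
    (hα₂ : 0 ≤ α₂) (hα₂' : α₂ < 1) (hα₃ : 0 ≤ α₃) (hα₃' : α₃ < 1)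
    (hs : α₁ + α₂ + α₃ = 1)
    (h12 : (r₁:ℝ) - 1 + α₁ ≥ (r₂:ℝ) + α₂) (h13 : (r₁:ℝ) - 1 + α₁ ≥ (r₃:ℝ) + 1 + α₃) :
    S1 n (r₁, r₂, r₃) (((r₁:ℝ) + α₁)/n, ((r₂:ℝ) + α₂)/n, ((r₃:ℝ) + α₃)/n)
      - S1 n (r₁ - 1, r₂, r₃ + 1)
          (((r₁:ℝ) - 1 + α₁)/n, ((r₂:ℝ) + α₂)/n, ((r₃:ℝ) + 1 + α₃)/n)
      ≥ -(2:ℝ) ^ (r₂ + r₃ + 2) + 2 ^ (r₃ + 1) :=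
  delta1_lower_bound_general n r₁ r₂ r₃ hr α₁ α₂ α₃ hα₁ hα₁' hα₂ hα₂' hα₃ hα₃' hs h13
end

section
/- Under the stated setup, δ₃ = S₃((r₁, r₂, r₃); λ) − S₃((r₁−1, r₂, r₃+1); λ') satisfies δ₃ ≥ −2^{r₂−1}/r₁. -/
open Finset

/-- `S₃((ρ₁,ρ₂,ρ₃); μ) = Σ_{i₂=0}^{ρ₂} Σ_{i₁=0}^{ρ₁} |l_{(i₁, i₂, n−i₁−i₂)}(μ)|`. -/
noncomputable def S3 (n : ℕ) (ρ : ℕ × ℕ × ℕ) (mu : ℝ × ℝ × ℝ) : ℝ :=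
  ∑ i₂ ∈ Finset.range (ρ.2.1 + 1), ∑ i₁ ∈ Finset.range (ρ.1 + 1),
    |lagPoly n mu (i₁, i₂, n - i₁ - i₂)|

/-! With `u = r₁ - 1 + α₁`, `w = r₂ + α₂`, `y = r₃ + α₃`, the terms of `S₃` at `λ` and `λ'` are
products of generalized binomial coefficients at `(u + 1, w, y)` and `(u, w, y + 1)`. The
absorption identities for binomial coefficients compare them: in every row `i₂ < r₂` each
`λ'`-term is dominated by the `λ`-term with the same index, and in the row `i₂ = r₂` the
`λ'`-term with index `i₁` is dominated by the `λ`-term with index `i₁ + 1`. Only the corner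
`i₁ = r₁ - 1` is left over, and AM-GM bounds its excess by `2 ^ r₂ / (4 r₁)`. -/

-- `x` choose `i`, except that `Γ (-m) = 0` makes it vanish when `x` is a negative integer.
noncomputable def gbinom (x : ℝ) (i : ℕ) : ℝ :=
  Real.Gamma (x + 1) / (i.factorial * Real.Gamma (x - i + 1))

noncomputable def S3Row (n m : ℕ) (a b c : ℝ) (i₂ : ℕ) : ℝ :=
  ∑ i₁ ∈ range (m + 1), |gbinom a i₁ * gbinom b i₂ * gbinom c (n - i₁ - i₂)|

lemma S3_div_eq {n : ℕ} (hn : n ≠ 0) (ρ₁ ρ₂ ρ₃ : ℕ) (a b c : ℝ) :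
    S3 n (ρ₁, ρ₂, ρ₃) (a / n, b / n, c / n) = ∑ i₂ ∈ range (ρ₂ + 1), S3Row n ρ₁ a b c i₂ := by
  have hn' : (n : ℝ) ≠ 0 := Nat.cast_ne_zero.2 hn
  simp only [S3, S3Row, lagPoly, gbinom, mul_div_cancel₀ _ hn']

lemma gbinom_zero_le_one (x : ℝ) : gbinom x 0 ≤ 1 := by
  simpa [gbinom] using div_self_le_one (Real.Gamma (x + 1))

lemma gbinom_nonneg {x : ℝ} {i : ℕ} (h : (i : ℝ) ≤ x + 1) : 0 ≤ gbinom x i :=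
  div_nonneg (Real.Gamma_nonneg_of_nonneg (by linarith [(i.cast_nonneg : (0:ℝ) ≤ i)]))
    (mul_nonneg (by positivity) (Real.Gamma_nonneg_of_nonneg (by linarith)))

lemma gbinom_succ_mul (x : ℝ) (i : ℕ) :
    gbinom (x + 1) (i + 1) * (i + 1) = gbinom x i * (x + 1) := by
  rcases eq_or_ne (x + 1) 0 with hx | hx
  · have : x - i + 1 = -(i : ℝ) := by linarith
    simp [gbinom, this, Real.Gamma_neg_nat_eq_zero]
  · have hshift : x + 1 - ((i + 1 : ℕ) : ℝ) + 1 = x - i + 1 := by push_cast; ring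
    simp only [gbinom, hshift, Nat.factorial_succ, Real.Gamma_add_one hx]
    push_cast
    field_simp

lemma gbinom_mul_add_one (x : ℝ) (i : ℕ) :
    gbinom x i * (x + 1) = gbinom (x + 1) i * (x + 1 - i) := by
  rcases eq_or_ne (x + 1) 0 with hx | hx
  · rcases i with _ | i
    · simp [hx]
    · simp [gbinom, hx, Real.Gamma_neg_nat_eq_zero]
  rcases eq_or_ne (x + 1 - i) 0 with hxi | hxi
  · have : x - i + 1 = 0 := by linarith
    simp [gbinom, hxi, this, Real.Gamma_zero]
  · have hshift : x - i + 1 = x + 1 - i := by ring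
    rw [gbinom, gbinom, hshift, Real.Gamma_add_one hx, Real.Gamma_add_one hxi]
    field_simp

lemma gbinom_add_le_two_pow {c : ℝ} (hc : -1 ≤ c) (hc' : c ≤ 1) (j : ℕ) :
    gbinom (c + j) j ≤ 2 ^ j := by
  induction j with
  | zero => simpa using gbinom_zero_le_one c
  | succ j ih =>
    have hrec := gbinom_succ_mul (c + j) j
    rw [show c + ((j + 1 : ℕ) : ℝ) = c + j + 1 by push_cast; ring]
    have h0 : 0 ≤ gbinom (c + j) j := gbinom_nonneg (by linarith)
    have hj : (0 : ℝ) < j + 1 := by positivity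
    refine le_of_mul_le_mul_right ?_ hj
    rw [hrec, pow_succ]
    nlinarith

lemma gbinom_add_succ_le {c : ℝ} (hc : -1 ≤ c) (hc' : c ≤ 0) (j : ℕ) :
    gbinom (c + (j + 1 : ℕ)) (j + 1) ≤ c + 1 := by
  induction j with
  | zero =>
    have hrec := gbinom_succ_mul c 0
    have := gbinom_zero_le_one c
    simp only [zero_add, Nat.cast_one, mul_one, Nat.cast_zero] at hrec ⊢
    rw [hrec]
    nlinarith
  | succ j ih =>
    have hrec := gbinom_succ_mul (c + (j + 1 : ℕ)) (j + 1)
    rw [show c + ((j + 1 + 1 : ℕ) : ℝ) = c + (j + 1 : ℕ) + 1 by push_cast; ring]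
    have h0 : 0 ≤ gbinom (c + (j + 1 : ℕ)) (j + 1) := gbinom_nonneg (by push_cast; linarith)
    have hj : (0 : ℝ) < (j + 1 : ℕ) + 1 := by positivity
    refine le_of_mul_le_mul_right ?_ hj
    rw [hrec]
    push_cast at ih h0 ⊢
    nlinarith

lemma abs_gbinom_mul_shift_le {u y : ℝ} (w : ℝ) {i₁ i₂ i₃ : ℕ} (hi₁ : (i₁ : ℝ) < u + 1)
    (hy : 0 ≤ y + 1) (hyu : y ≤ u) (h : u + 1 - i₁ ≤ i₃ - (y + 1)) :
    |gbinom u i₁ * gbinom w i₂ * gbinom (y + 1) i₃|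
      ≤ |gbinom (u + 1) i₁ * gbinom w i₂ * gbinom y i₃| := by
  have e₁ := congrArg abs (gbinom_mul_add_one u i₁)
  rw [abs_mul, abs_mul, abs_of_pos (by linarith : 0 < u + 1),
    abs_of_pos (by linarith : 0 < u + 1 - i₁)] at e₁
  have e₃ := congrArg abs (gbinom_mul_add_one y i₃)
  rw [abs_mul, abs_mul, abs_of_nonneg hy, abs_of_nonpos (by linarith : y + 1 - i₃ ≤ 0),
    neg_sub] at e₃
  simp only [abs_mul]
  have hp : 0 < (i₃ - (y + 1)) * (u + 1) := mul_pos (by linarith) (by linarith)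
  refine le_of_mul_le_mul_right ?_ hp
  calc |gbinom u i₁| * |gbinom w i₂| * |gbinom (y + 1) i₃| * ((i₃ - (y + 1)) * (u + 1))
      = |gbinom (u + 1) i₁| * |gbinom w i₂| * |gbinom y i₃| * ((u + 1 - i₁) * (y + 1)) := by
        linear_combination (|gbinom w i₂| * |gbinom (y + 1) i₃| * (i₃ - (y + 1))) * e₁
          - (|gbinom (u + 1) i₁| * |gbinom w i₂| * (u + 1 - i₁)) * e₃
    _ ≤ |gbinom (u + 1) i₁| * |gbinom w i₂| * |gbinom y i₃| * ((i₃ - (y + 1)) * (u + 1)) := by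
        refine mul_le_mul_of_nonneg_left ?_ (by positivity)
        exact mul_le_mul h (by linarith) hy (by linarith)

lemma abs_gbinom_mul_succ_le {u y : ℝ} (w : ℝ) {i₁ i₂ j : ℕ} (hu : 0 < u + 1) (hy : 0 ≤ y + 1)
    (h : (i₁ + 1) * (y + 1) ≤ (u + 1) * (j + 1)) :
    |gbinom u i₁ * gbinom w i₂ * gbinom (y + 1) (j + 1)|
      ≤ |gbinom (u + 1) (i₁ + 1) * gbinom w i₂ * gbinom y j| := by
  have e₁ := congrArg abs (gbinom_succ_mul u i₁)
  rw [abs_mul, abs_mul, abs_of_pos hu, abs_of_pos (by positivity : (0 : ℝ) < i₁ + 1)] at e₁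
  have e₃ := congrArg abs (gbinom_succ_mul y j)
  rw [abs_mul, abs_mul, abs_of_nonneg hy, abs_of_pos (by positivity : (0 : ℝ) < j + 1)] at e₃
  simp only [abs_mul]
  have hp : 0 < (u + 1) * (j + 1) := by positivity
  refine le_of_mul_le_mul_right ?_ hp
  calc |gbinom u i₁| * |gbinom w i₂| * |gbinom (y + 1) (j + 1)| * ((u + 1) * (j + 1))
      = |gbinom (u + 1) (i₁ + 1)| * |gbinom w i₂| * |gbinom y j| * ((i₁ + 1) * (y + 1)) := by
        linear_combination (-(|gbinom w i₂| * |gbinom (y + 1) (j + 1)| * (j + 1))) * e₁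
          + (|gbinom (u + 1) (i₁ + 1)| * |gbinom w i₂| * (i₁ + 1)) * e₃
    _ ≤ |gbinom (u + 1) (i₁ + 1)| * |gbinom w i₂| * |gbinom y j| * ((u + 1) * (j + 1)) := by
        gcongr

lemma sub_le_div_of_mul_eq {P B R S a₁ a₃ t t' : ℝ} (hP : 0 ≤ P)
    (hPB : a₁ ≤ 0 → P ≤ (a₁ + 1) * B) (hB : 0 ≤ B) (hS : 0 < S) (hSR : S ≤ R)
    (ha₃ : 0 ≤ a₃) (ha₃' : a₃ ≤ 1) (ht' : t' * S = P * (S - 1 + a₃)) (ht : t * R = P * (R + a₁)) :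
    t' - t ≤ B / (4 * R) := by
  have hR : 0 < R := hS.trans_le hSR
  have key : (t' - t) * (R * S) = P * (R * (a₃ - 1) - a₁ * S) := by
    linear_combination R * ht' - S * ht
  rw [le_div_iff₀ (by positivity)]
  rcases le_or_gt (R * (a₃ - 1) - a₁ * S) 0 with hM | hM
  · nlinarith [mul_nonpos_of_nonneg_of_nonpos hP hM]
  have ha₁ : a₁ < 0 := by nlinarith
  have hM_le : R * (a₃ - 1) - a₁ * S ≤ S * (a₃ - 1 - a₁) := by nlinarith
  have amgm : (a₁ + 1) * (a₃ - 1 - a₁) ≤ 1 / 4 := by nlinarith [sq_nonneg (2 * a₁ + 2 - a₃)]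
  have : (t' - t) * (R * S) ≤ B * S / 4 := by
    calc (t' - t) * (R * S) = P * (R * (a₃ - 1) - a₁ * S) := key
      _ ≤ (a₁ + 1) * B * (S * (a₃ - 1 - a₁)) :=
          mul_le_mul (hPB ha₁.le) hM_le hM.le (hP.trans (hPB ha₁.le))
      _ = B * S * ((a₁ + 1) * (a₃ - 1 - a₁)) := by ring
      _ ≤ B * S / 4 := by nlinarith [mul_nonneg hB hS.le]
  nlinarith

lemma abs_corner_sub_le (k r₂ r₃ : ℕ) {α₁ α₂ α₃ : ℝ} (hα₁ : -1 ≤ α₁) (hα₂ : -1 ≤ α₂)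
    (hα₂' : α₂ ≤ 1) (hα₃ : 0 ≤ α₃) (hα₃' : α₃ ≤ 1) (hk : r₃ + 1 ≤ k) :
    |gbinom (k + α₁) k * gbinom (r₂ + α₂) r₂ * gbinom (r₃ + α₃ + 1) (r₃ + 2)|
      - |gbinom (k + α₁ + 1) (k + 1) * gbinom (r₂ + α₂) r₂ * gbinom (r₃ + α₃) (r₃ + 1)|
      ≤ 2 ^ r₂ / (4 * (k + 1)) := by
  have e₁ := congrArg abs (gbinom_succ_mul (k + α₁) k)
  rw [abs_mul, abs_mul, abs_of_pos (by positivity : (0 : ℝ) < k + 1),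
    abs_of_nonneg (by linarith : 0 ≤ (k : ℝ) + α₁ + 1)] at e₁
  have e₃ := congrArg abs (gbinom_succ_mul (r₃ + α₃) (r₃ + 1))
  rw [abs_mul, abs_mul, abs_of_pos (by positivity : (0 : ℝ) < ((r₃ + 1 : ℕ) : ℝ) + 1),
    abs_of_nonneg (by positivity : 0 ≤ (r₃ : ℝ) + α₃ + 1)] at e₃
  push_cast at e₃
  have hPB : α₁ ≤ 0 → |gbinom (k + α₁) k| * |gbinom (r₂ + α₂) r₂| * |gbinom (r₃ + α₃) (r₃ + 1)|
      ≤ (α₁ + 1) * 2 ^ r₂ := by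
    intro hα₁'
    obtain ⟨j, rfl⟩ : ∃ j, k = j + 1 := ⟨k - 1, by omega⟩
    have h₁ : |gbinom (↑(j + 1) + α₁) (j + 1)| ≤ α₁ + 1 := by
      rw [abs_of_nonneg (gbinom_nonneg (by push_cast; linarith)), add_comm]
      exact gbinom_add_succ_le hα₁ hα₁' j
    have h₂ : |gbinom (r₂ + α₂) r₂| ≤ 2 ^ r₂ := by
      rw [abs_of_nonneg (gbinom_nonneg (by linarith)), add_comm]
      exact gbinom_add_le_two_pow hα₂ hα₂' r₂
    have h₃ : |gbinom (r₃ + α₃) (r₃ + 1)| ≤ 1 := by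
      rw [abs_of_nonneg (gbinom_nonneg (by push_cast; linarith))]
      have := gbinom_add_succ_le (by linarith : -1 ≤ α₃ - 1) (by linarith) r₃
      rw [show α₃ - 1 + ((r₃ + 1 : ℕ) : ℝ) = r₃ + α₃ by push_cast; ring] at this
      linarith
    calc _ ≤ (α₁ + 1) * 2 ^ r₂ * 1 :=
          mul_le_mul (mul_le_mul h₁ h₂ (abs_nonneg _) (by linarith)) h₃ (abs_nonneg _)
            (mul_nonneg (by linarith) (by positivity))
      _ = (α₁ + 1) * 2 ^ r₂ := mul_one _
  refine sub_le_div_of_mul_eq (S := (r₃ : ℝ) + 2) (by positivity) hPB (by positivity)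
    (by positivity) (by exact_mod_cast (by omega : r₃ + 2 ≤ k + 1)) hα₃ hα₃' ?_ ?_
  · rw [abs_mul, abs_mul]
    linear_combination (|gbinom (k + α₁) k| * |gbinom (r₂ + α₂) r₂|) * e₃
  · rw [abs_mul, abs_mul]
    linear_combination (|gbinom (r₂ + α₂) r₂| * |gbinom (r₃ + α₃) (r₃ + 1)|) * e₁

lemma neg_le_sum_range_succ {D : ℕ → ℝ} {m : ℕ} {ε : ℝ} (hD : ∀ i < m, 0 ≤ D i)
    (hm : -ε ≤ D m) : -ε ≤ ∑ i ∈ range (m + 1), D i := by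
  rw [sum_range_succ]
  have := sum_nonneg fun i hi => hD i (mem_range.1 hi)
  linarith

lemma neg_le_sum_range_sub_sum_range {a b : ℕ → ℝ} {m : ℕ} {ε : ℝ} (h₀ : 0 ≤ a 0)
    (hab : ∀ i < m, b i ≤ a (i + 1)) (hm : b m - a (m + 1) ≤ ε) :
    -ε ≤ ∑ i ∈ range (m + 2), a i - ∑ i ∈ range (m + 1), b i := by
  rw [sum_range_succ', sum_range_succ (fun i => a (i + 1)), sum_range_succ b]
  have := sum_le_sum fun i hi => hab i (mem_range.1 hi)
  linarith

lemma cast_sub_sub {n i j : ℕ} (h : i + j ≤ n) : ((n - i - j : ℕ) : ℝ) = n - i - j := by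
  rw [Nat.sub_sub, Nat.cast_sub h, Nat.cast_add, sub_sub]

section Rows

variable {k r₂ r₃ : ℕ} {α₁ α₂ α₃ : ℝ}

lemma S3Row_shift_le {i₂ : ℕ} (hα₁ : -1 < α₁) (hα₂ : 0 ≤ α₂) (hα₃ : 0 ≤ α₃)
    (hs : α₁ + α₂ + α₃ = 1) (h13 : r₃ + α₃ ≤ k + α₁) (hi₂ : i₂ < r₂) :
    S3Row (k + r₂ + r₃ + 2) k (k + α₁) (r₂ + α₂) (r₃ + α₃ + 1) i₂
      ≤ S3Row (k + r₂ + r₃ + 2) (k + 1) (k + α₁ + 1) (r₂ + α₂) (r₃ + α₃) i₂ := by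
  rw [S3Row, S3Row, sum_range_succ _ (k + 1)]
  refine le_add_of_le_of_nonneg (sum_le_sum fun i₁ hi₁ => ?_) (abs_nonneg _)
  have hi₁ : i₁ ≤ k := Nat.lt_succ_iff.1 (mem_range.1 hi₁)
  have hi₁' : (i₁ : ℝ) ≤ k := by exact_mod_cast hi₁
  have hi₂' : (i₂ : ℝ) + 1 ≤ r₂ := by exact_mod_cast hi₂
  refine abs_gbinom_mul_shift_le _ (by linarith) (by positivity) h13 ?_
  rw [cast_sub_sub (by omega)]
  push_cast
  linarith

lemma neg_le_S3Row_sub (hα₁ : -1 < α₁) (hα₂ : 0 ≤ α₂) (hα₂' : α₂ ≤ 1) (hα₃ : 0 ≤ α₃)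
    (hα₃' : α₃ ≤ 1) (hk : r₃ + 1 ≤ k) :
    -(2 ^ r₂ / (4 * (k + 1)))
      ≤ S3Row (k + r₂ + r₃ + 2) (k + 1) (k + α₁ + 1) (r₂ + α₂) (r₃ + α₃) r₂
        - S3Row (k + r₂ + r₃ + 2) k (k + α₁) (r₂ + α₂) (r₃ + α₃ + 1) r₂ := by
  refine neg_le_sum_range_sub_sum_range (abs_nonneg _) (fun i₁ hi₁ => ?_) ?_
  · obtain ⟨j, hj⟩ : ∃ j, k + r₂ + r₃ + 2 - i₁ - r₂ = j + 1 := ⟨k + r₃ + 1 - i₁, by omega⟩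
    rw [hj, show k + r₂ + r₃ + 2 - (i₁ + 1) - r₂ = j by omega]
    have hj' : (j : ℝ) = k + r₃ + 1 - i₁ := by
      rw [eq_sub_iff_add_eq]; exact_mod_cast (by omega : j + i₁ = k + r₃ + 1)
    have hi₁' : (i₁ : ℝ) + 1 ≤ k := by exact_mod_cast hi₁
    refine abs_gbinom_mul_succ_le _ (by linarith) (by positivity) ?_
    exact mul_le_mul (by linarith) (by rw [hj']; linarith) (by positivity) (by linarith)
  · rw [show k + r₂ + r₃ + 2 - k - r₂ = r₃ + 2 by omega,
      show k + r₂ + r₃ + 2 - (k + 1) - r₂ = r₃ + 1 by omega]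
    exact abs_corner_sub_le k r₂ r₃ hα₁.le (by linarith) hα₂' hα₃ hα₃' hk

end Rows

theorem delta3_lower_bound_general (n : ℕ) (r₁ r₂ r₃ : ℕ)
    (hr : r₁ + r₂ + r₃ = n - 1) (α₁ α₂ α₃ : ℝ)
    (hα₁ : -1 < α₁) (hα₁' : α₁ < 1)
    (hα₂ : 0 ≤ α₂) (hα₂' : α₂ < 1) (hα₃ : 0 ≤ α₃) (hα₃' : α₃ < 1)
    (hs : α₁ + α₂ + α₃ = 1)
    (h13 : (r₁:ℝ) - 1 + α₁ ≥ (r₃:ℝ) + 1 + α₃) :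
    S3 n (r₁, r₂, r₃) (((r₁:ℝ) + α₁)/n, ((r₂:ℝ) + α₂)/n, ((r₃:ℝ) + α₃)/n)
      - S3 n (r₁ - 1, r₂, r₃ + 1)
          (((r₁:ℝ) - 1 + α₁)/n, ((r₂:ℝ) + α₂)/n, ((r₃:ℝ) + 1 + α₃)/n)
      ≥ -((2:ℝ) ^ ((r₂:ℤ) - 1) / (r₁:ℝ)) := by
  have hr₁ : r₃ + 2 ≤ r₁ := by
    have : (r₃ : ℝ) + 1 < r₁ := by linarith
    exact_mod_cast this
  obtain ⟨k, rfl⟩ : ∃ k, r₁ = k + 1 := ⟨r₁ - 1, by omega⟩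
  obtain rfl : n = k + r₂ + r₃ + 2 := by omega
  have h13' : (r₃ : ℝ) + α₃ ≤ k + α₁ := by push_cast at h13; linarith
  have hε : (2 : ℝ) ^ r₂ / (4 * (k + 1)) ≤ 2 ^ ((r₂ : ℤ) - 1) / ((k + 1 : ℕ) : ℝ) := by
    rw [zpow_sub₀ two_ne_zero, zpow_natCast, zpow_one, div_div, Nat.cast_succ]
    gcongr
    linarith
  rw [S3_div_eq (by omega), S3_div_eq (by omega), Nat.add_sub_cancel, ← sum_sub_distrib,
    ge_iff_le, show ((k + 1 : ℕ) : ℝ) + α₁ = k + α₁ + 1 by push_cast; ring,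
    show ((k + 1 : ℕ) : ℝ) - 1 + α₁ = k + α₁ by push_cast; ring,
    show (r₃ : ℝ) + 1 + α₃ = r₃ + α₃ + 1 by ring]
  exact (neg_le_neg hε).trans <| neg_le_sum_range_succ
    (fun i₂ hi₂ => sub_nonneg.2 (S3Row_shift_le hα₁ hα₂ hα₃ hs h13' hi₂))
    (neg_le_S3Row_sub hα₁ hα₂ hα₂'.le hα₃ hα₃'.le (by omega))

theorem delta3_lower_bound (n : ℕ) (hn : 4 ≤ n) (r₁ r₂ r₃ : ℕ)
    (hr : r₁ + r₂ + r₃ = n - 1) (α₁ α₂ α₃ : ℝ)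
    (hα₁ : -1 < α₁) (hα₁' : α₁ < 1)
    (hα₂ : 0 ≤ α₂) (hα₂' : α₂ < 1) (hα₃ : 0 ≤ α₃) (hα₃' : α₃ < 1)
    (hs : α₁ + α₂ + α₃ = 1)
    (h12 : (r₁:ℝ) - 1 + α₁ ≥ (r₂:ℝ) + α₂) (h13 : (r₁:ℝ) - 1 + α₁ ≥ (r₃:ℝ) + 1 + α₃) :
    S3 n (r₁, r₂, r₃) (((r₁:ℝ) + α₁)/n, ((r₂:ℝ) + α₂)/n, ((r₃:ℝ) + α₃)/n)
      - S3 n (r₁ - 1, r₂, r₃ + 1)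
          (((r₁:ℝ) - 1 + α₁)/n, ((r₂:ℝ) + α₂)/n, ((r₃:ℝ) + 1 + α₃)/n)
      ≥ -((2:ℝ) ^ ((r₂:ℤ) - 1) / (r₁:ℝ)) :=
  delta3_lower_bound_general n r₁ r₂ r₃ hr α₁ α₂ α₃ hα₁ hα₁' hα₂ hα₂' hα₃ hα₃' hs h13
end

section
/- Under the stated setup, δ₆ = S₆((r₁, r₂, r₃); λ) − S₆((r₁−1, r₂, r₃+1); λ') satisfies δ₆ ≥ Σ_{i₂=r₂+1}^{n−r₃−1} a_{i₂} · C(r₁−1+α₁, n−r₃−i₂−1) · C(r₃+α₃, r₃+1). -/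
open Finset

/-- Generalized binomial coefficient `C(a,b) = Γ(a+1)/(Γ(b+1)·Γ(a−b+1))`. -/
noncomputable def genBinom (a b : ℝ) : ℝ :=
  Real.Gamma (a + 1) / (Real.Gamma (b + 1) * Real.Gamma (a - b + 1))

/-- `S₆((ρ₁,ρ₂,ρ₃); μ) = Σ_{i₂=ρ₂+1}^{n−ρ₃−1} Σ_{i₁=0}^{n−ρ₃−1−i₂} |l_{(i₁, i₂, n−i₁−i₂)}(μ)|`. -/
noncomputable def S6 (n : ℕ) (ρ : ℕ × ℕ × ℕ) (mu : ℝ × ℝ × ℝ) : ℝ :=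
  ∑ i₂ ∈ Finset.Icc (ρ.2.1 + 1) (n - ρ.2.2 - 1), ∑ i₁ ∈ Finset.range (n - ρ.2.2 - i₂),
    |lagPoly n mu (i₁, i₂, n - i₁ - i₂)|

/-! Put `n = r₁ + r₂ + r₃ + 1` and compare the two sums column by column (fixed `i₂`), where every
`|l_i|` factors into generalized binomial coefficients. In a column, Pascal's rule splits
`|C(r₁+α₁, k)|` into the positive terms `C(r₁-1+α₁, k) + C(r₁-1+α₁, k-1)`, while the coefficients
`C(r₃+α₃, j)`, `j > r₃`, alternate in sign, so that Pascal's rule for them reads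
`|C(r₃+1+α₃, j+1)| = |C(r₃+α₃, j)| - |C(r₃+α₃, j+1)|`. After these substitutions the difference
of the two column sums becomes a sum of nonnegative terms, the last of which is the claimed
bound. -/

theorem genBinom_natCast_right (a : ℝ) (k : ℕ) :
    genBinom a k = Real.Gamma (a + 1) / (k.factorial * Real.Gamma (a - k + 1)) := by
  rw [genBinom, Real.Gamma_nat_eq_factorial]

theorem genBinom_zero_right {a : ℝ} (ha : 0 < a + 1) : genBinom a 0 = 1 := by
  simp [genBinom, (Real.Gamma_pos_of_pos ha).ne']

theorem genBinom_nat_pos {a : ℝ} {k : ℕ} (hk : (k : ℝ) < a + 1) : 0 < genBinom a k :=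
  div_pos (Real.Gamma_pos_of_pos (by linarith [k.cast_nonneg (α := ℝ)]))
    (mul_pos (Real.Gamma_pos_of_pos (by positivity)) (Real.Gamma_pos_of_pos (by linarith)))

theorem genBinom_add_one_left {a b : ℝ} (ha : a + 1 ≠ 0) (hb : b ≠ 0) (hab : a - b + 1 ≠ 0) :
    genBinom (a + 1) b = genBinom a b + genBinom a (b - 1) := by
  unfold genBinom
  rw [show a + 1 - b + 1 = (a - b + 1) + 1 by ring, show a - (b - 1) + 1 = (a - b + 1) + 1 by ring,
    sub_add_cancel, Real.Gamma_add_one ha, Real.Gamma_add_one hb, Real.Gamma_add_one hab]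
  -- where `Γ b` or `Γ (a - b + 1)` vanishes, all three coefficients are junk zeros
  rcases eq_or_ne (Real.Gamma b) 0 with hΓb | hΓb
  · simp [hΓb]
  rcases eq_or_ne (Real.Gamma (a - b + 1)) 0 with hΓab | hΓab
  · simp [hΓab]
  field_simp
  ring

theorem neg_one_pow_mul_Gamma_sub_nat_nonneg {α : ℝ} (hα : 0 ≤ α) (hα' : α < 1) (t : ℕ) :
    0 ≤ (-1) ^ t * Real.Gamma (α - t) := by
  induction t with
  | zero => simpa using Real.Gamma_nonneg_of_nonneg hα
  | succ t ih =>
    have hneg : α - (t + 1 : ℕ) < 0 := by push_cast; linarith [(t.cast_nonneg : (0:ℝ) ≤ t)]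
    have hrec : Real.Gamma (α - t) = (α - (t + 1 : ℕ)) * Real.Gamma (α - (t + 1 : ℕ)) := by
      rw [← Real.Gamma_add_one hneg.ne]
      push_cast; ring_nf
    rw [hrec, mul_left_comm] at ih
    rw [pow_succ, mul_right_comm, mul_neg_one, neg_nonneg]
    exact nonpos_of_mul_nonneg_right ih hneg

theorem abs_genBinom_eq_neg_one_pow_mul {α : ℝ} (hα : 0 ≤ α) (hα' : α < 1) {r j : ℕ}
    (hrj : r < j) : |genBinom (r + α) j| = (-1) ^ (j - r - 1) * genBinom (r + α) j := by
  have hΓ := neg_one_pow_mul_Gamma_sub_nat_nonneg hα hα' (j - r - 1)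
  rw [Nat.cast_sub (by omega), Nat.cast_sub (by omega), Nat.cast_one,
    show α - (j - r - 1) = r + α - j + 1 by ring] at hΓ
  have hN := Real.Gamma_pos_of_pos (show (0:ℝ) < r + α + 1 by positivity)
  have hD := Real.Gamma_pos_of_pos (show (0:ℝ) < j + 1 by positivity)
  have hsign : 0 ≤ (-1) ^ (j - r - 1) * genBinom (r + α) j := by
    unfold genBinom
    rcases neg_one_pow_eq_or ℝ (j - r - 1) with h | h <;> rw [h] at hΓ ⊢
    · rw [one_mul] at hΓ ⊢
      positivity
    · rw [neg_one_mul, neg_nonneg] at hΓ ⊢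
      exact div_nonpos_of_nonneg_of_nonpos hN.le
        (mul_nonpos_of_nonneg_of_nonpos hD.le (by linarith))
  rw [← abs_of_nonneg hsign, abs_mul, abs_pow, abs_neg, abs_one, one_pow, one_mul]

theorem abs_genBinom_add_one {α : ℝ} (hα : 0 ≤ α) (hα' : α < 1) {r j : ℕ} (hrj : r < j) :
    |genBinom (r + 1 + α) (j + 1 : ℕ)| = |genBinom (r + α) j| - |genBinom (r + α) (j + 1 : ℕ)| := by
  have hjr : (r : ℝ) + 1 ≤ j := by exact_mod_cast hrj
  have hpascal := genBinom_add_one_left (a := r + α) (b := (j + 1 : ℕ))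
    (by positivity) (by positivity) (by push_cast; linarith)
  have hshift := abs_genBinom_eq_neg_one_pow_mul hα hα' (show r + 1 < j + 1 by omega)
  rw [Nat.cast_succ r, add_right_comm] at hshift
  rw [add_right_comm (r : ℝ), hshift, hpascal, abs_genBinom_eq_neg_one_pow_mul hα hα' hrj,
    abs_genBinom_eq_neg_one_pow_mul hα hα' (show r < j + 1 by omega),
    show j + 1 - (r + 1) - 1 = j - r - 1 by omega, show j + 1 - r - 1 = (j - r - 1) + 1 by omega,
    Nat.cast_succ j, add_sub_cancel_right, pow_succ]
  ring

theorem sum_abs_genBinom_add_one_mul {a : ℝ} {M : ℕ} (haM : (M : ℝ) < a + 1) (u : ℕ → ℝ) :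
    ∑ k ∈ range (M + 1), |genBinom (a + 1) k| * u k =
      ∑ k ∈ range (M + 1), genBinom a k * u k + ∑ k ∈ range M, genBinom a k * u (k + 1) := by
  have hM : ∀ k ∈ range (M + 1), (k : ℝ) ≤ M := fun k hk ↦ by
    exact_mod_cast Nat.lt_succ_iff.mp (mem_range.mp hk)
  have hpascal : ∀ k ∈ range M,
      genBinom (a + 1) (k + 1 : ℕ) = genBinom a (k + 1 : ℕ) + genBinom a k := fun k hk ↦ by
    have hkM : (k : ℝ) + 1 ≤ M := by exact_mod_cast mem_range.mp hk
    rw [genBinom_add_one_left (by linarith) (by positivity) (by push_cast; linarith),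
      Nat.cast_succ, add_sub_cancel_right]
  rw [sum_congr rfl fun k hk ↦ by rw [abs_of_pos (genBinom_nat_pos (by linarith [hM k hk]))],
    sum_range_succ', sum_congr rfl fun k hk ↦ by rw [hpascal k hk], sum_range_succ' _ M,
    Nat.cast_zero, genBinom_zero_right (by linarith), genBinom_zero_right (by linarith)]
  simp only [add_mul, sum_add_distrib]
  ring

theorem genBinom_le_sub_sum {a α : ℝ} (hα : 0 ≤ α) (hα' : α < 1) {r M : ℕ}
    (haM : (M : ℝ) < a + 1) :
    genBinom a M * genBinom (r + α) (r + 1) ≤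
      ∑ k ∈ range (M + 1), |genBinom (a + 1) k| * |genBinom (r + α) (r + 1 + M - k : ℕ)| -
        ∑ k ∈ range M, |genBinom a k| * |genBinom (r + 1 + α) (r + 1 + M - k : ℕ)| := by
  set u : ℕ → ℝ := fun k ↦ |genBinom (r + α) (r + 1 + M - k : ℕ)| with hu
  have hpos : ∀ k ∈ range (M + 1), 0 < genBinom a k := fun k hk ↦ by
    have : (k : ℝ) ≤ M := by exact_mod_cast Nat.lt_succ_iff.mp (mem_range.mp hk)
    exact genBinom_nat_pos (by linarith)
  have hshifted : ∀ k ∈ range M, |genBinom a k| * |genBinom (r + 1 + α) (r + 1 + M - k : ℕ)| =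
      genBinom a k * (u (k + 1) - u k) := fun k hk ↦ by
    have hkM := mem_range.mp hk
    rw [abs_of_pos (hpos k (mem_range.mpr (by omega))), hu]
    dsimp only
    rw [show r + 1 + M - k = (r + 1 + M - (k + 1)) + 1 by omega,
      abs_genBinom_add_one hα hα' (by omega)]
  have huM : u M = genBinom (r + α) (r + 1) := by
    rw [hu]
    dsimp only
    rw [show r + 1 + M - M = r + 1 by omega,
      abs_genBinom_eq_neg_one_pow_mul hα hα' r.lt_succ_self]
    simp
  have hnonneg : 0 ≤ ∑ k ∈ range M, genBinom a k * u k :=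
    sum_nonneg fun k hk ↦ mul_nonneg (hpos k (mem_range.mpr (by simp at hk; omega))).le
      (abs_nonneg _)
  rw [sum_abs_genBinom_add_one_mul haM u, sum_congr rfl hshifted]
  simp only [mul_sub, sum_sub_distrib, sum_range_succ _ M, huM]
  linarith

theorem lagPoly_div_eq_s11 {n : ℕ} (hn : (n : ℝ) ≠ 0) (x y z : ℝ) (i₁ i₂ i₃ : ℕ) :
    lagPoly n (x / n, y / n, z / n) (i₁, i₂, i₃) =
      genBinom x i₁ * genBinom y i₂ * genBinom z i₃ := by
  simp only [lagPoly, genBinom_natCast_right, mul_div_cancel₀ _ hn]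

theorem S6_succ_eq_sum_Icc (n ρ₁ ρ₂ ρ₃ : ℕ) (μ : ℝ × ℝ × ℝ) :
    S6 n (ρ₁, ρ₂, ρ₃ + 1) μ = ∑ i₂ ∈ Icc (ρ₂ + 1) (n - ρ₃ - 1),
      ∑ i₁ ∈ range (n - (ρ₃ + 1) - i₂), |lagPoly n μ (i₁, i₂, n - i₁ - i₂)| := by
  dsimp only [S6]
  refine sum_subset (Icc_subset_Icc_right (by omega)) fun i₂ hi₂ hi₂' ↦ ?_
  simp only [mem_Icc] at hi₂ hi₂'
  simp [show n - (ρ₃ + 1) - i₂ = 0 by omega]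

theorem lagPoly_column_le {n r₁ r₂ r₃ i₂ : ℕ} (hn : n = r₁ + r₂ + r₃ + 1) (hlo : r₂ < i₂)
    (hhi : i₂ ≤ r₁ + r₂) {α₁ α₃ : ℝ} (y : ℝ) (hα₁ : -1 < α₁) (hα₃ : 0 ≤ α₃) (hα₃' : α₃ < 1) :
    |Real.Gamma (y + 1) / (i₂.factorial * Real.Gamma (y + 1 - i₂))|
        * genBinom ((r₁:ℝ) - 1 + α₁) ((n:ℝ) - r₃ - i₂ - 1) * genBinom ((r₃:ℝ) + α₃) ((r₃:ℝ) + 1) ≤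
      ∑ i₁ ∈ range (n - r₃ - i₂),
          |lagPoly n (((r₁:ℝ) + α₁) / n, y / n, ((r₃:ℝ) + α₃) / n) (i₁, i₂, n - i₁ - i₂)| -
        ∑ i₁ ∈ range (n - (r₃ + 1) - i₂),
          |lagPoly n (((r₁:ℝ) - 1 + α₁) / n, y / n, ((r₃:ℝ) + 1 + α₃) / n)
            (i₁, i₂, n - i₁ - i₂)| := by
  subst hn
  have key := genBinom_le_sub_sum hα₃ hα₃' (a := r₁ - 1 + α₁) (r := r₃) (M := r₁ + r₂ - i₂)
    (by have : (r₂ : ℝ) + 1 ≤ i₂ := by exact_mod_cast hlo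
        rw [Nat.cast_sub hhi]; push_cast; linarith)
  have hidx : ∀ k, r₁ + r₂ + r₃ + 1 - k - i₂ = r₃ + 1 + (r₁ + r₂ - i₂) - k := by omega
  have hM : ((r₁ + r₂ + r₃ + 1 : ℕ) : ℝ) - r₃ - i₂ - 1 = (r₁ + r₂ - i₂ : ℕ) := by
    rw [Nat.cast_sub hhi]
    push_cast
    ring
  rw [show (r₁ : ℝ) + α₁ = (r₁ - 1 + α₁) + 1 by ring,
    show r₁ + r₂ + r₃ + 1 - r₃ - i₂ = r₁ + r₂ - i₂ + 1 by omega,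
    show r₁ + r₂ + r₃ + 1 - (r₃ + 1) - i₂ = r₁ + r₂ - i₂ by omega, hM,
    add_sub_right_comm y 1, ← genBinom_natCast_right]
  simp only [lagPoly_div_eq_s11 (n := r₁ + r₂ + r₃ + 1) (by positivity), abs_mul, hidx,
    mul_right_comm _ |genBinom y i₂|, ← sum_mul, ← sub_mul]
  rw [mul_assoc, mul_comm]
  exact mul_le_mul_of_nonneg_right key (abs_nonneg _)

theorem delta6_lower_bound_general (n : ℕ) (r₁ r₂ r₃ : ℕ)
    (hr : r₁ + r₂ + r₃ = n - 1) (α₁ α₂ α₃ : ℝ)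
    (hα₁ : -1 < α₁) (hα₃ : 0 ≤ α₃) (hα₃' : α₃ < 1) :
    S6 n (r₁, r₂, r₃) (((r₁:ℝ) + α₁)/n, ((r₂:ℝ) + α₂)/n, ((r₃:ℝ) + α₃)/n)
      - S6 n (r₁ - 1, r₂, r₃ + 1)
          (((r₁:ℝ) - 1 + α₁)/n, ((r₂:ℝ) + α₂)/n, ((r₃:ℝ) + 1 + α₃)/n)
      ≥ ∑ i₂ ∈ Finset.Icc (r₂ + 1) (n - r₃ - 1),
          |Real.Gamma ((r₂:ℝ) + α₂ + 1) / (i₂.factorial * Real.Gamma ((r₂:ℝ) + α₂ + 1 - i₂))|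
            * genBinom ((r₁:ℝ) - 1 + α₁) ((n:ℝ) - r₃ - i₂ - 1)
            * genBinom ((r₃:ℝ) + α₃) ((r₃:ℝ) + 1) := by
  rw [ge_iff_le, S6, S6_succ_eq_sum_Icc, ← sum_sub_distrib]
  refine sum_le_sum fun i₂ hi₂ ↦ ?_
  obtain ⟨hlo, hhi⟩ := mem_Icc.mp hi₂
  exact lagPoly_column_le (by omega) hlo (by omega) _ hα₁ hα₃ hα₃'

theorem delta6_lower_bound (n : ℕ) (hn : 4 ≤ n) (r₁ r₂ r₃ : ℕ)
    (hr : r₁ + r₂ + r₃ = n - 1) (α₁ α₂ α₃ : ℝ)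
    (hα₁ : -1 < α₁) (hα₁' : α₁ < 1)
    (hα₂ : 0 ≤ α₂) (hα₂' : α₂ < 1) (hα₃ : 0 ≤ α₃) (hα₃' : α₃ < 1)
    (hs : α₁ + α₂ + α₃ = 1)
    (h12 : (r₁:ℝ) - 1 + α₁ ≥ (r₂:ℝ) + α₂) (h13 : (r₁:ℝ) - 1 + α₁ ≥ (r₃:ℝ) + 1 + α₃) :
    S6 n (r₁, r₂, r₃) (((r₁:ℝ) + α₁)/n, ((r₂:ℝ) + α₂)/n, ((r₃:ℝ) + α₃)/n)
      - S6 n (r₁ - 1, r₂, r₃ + 1)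
          (((r₁:ℝ) - 1 + α₁)/n, ((r₂:ℝ) + α₂)/n, ((r₃:ℝ) + 1 + α₃)/n)
      ≥ ∑ i₂ ∈ Finset.Icc (r₂ + 1) (n - r₃ - 1),
          |Real.Gamma ((r₂:ℝ) + α₂ + 1) / (i₂.factorial * Real.Gamma ((r₂:ℝ) + α₂ + 1 - i₂))|
            * genBinom ((r₁:ℝ) - 1 + α₁) ((n:ℝ) - r₃ - i₂ - 1)
            * genBinom ((r₃:ℝ) + α₃) ((r₃:ℝ) + 1) :=
  delta6_lower_bound_general n r₁ r₂ r₃ hr α₁ α₂ α₃ hα₁ hα₃ hα₃'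
end
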